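/- The number of non-squashing partitions into distinct parts whose largest part equals exactly n is equal to b(2n), the number of non-squashing partitions of 2n into distinct parts; equivalently, f(n) - f(n-1) = b(2n) for n ≥ 1, where f(n) counts non-squashing partitions into distinct parts all at most n. -/

import Mathlib

/-- A partition written as a nondecreasing list of positive parts. -/
def IsPartList (l : List ℕ) : Prop :=
  l.Pairwise (· ≤ ·) ∧ ∀ p ∈ l, 0 < p

/-- A partition with distinct parts, written as a strictly increasing list of positive parts. -/
def DistinctPartList (l : List ℕ) : Prop :=
  l.Pairwise (· < ·) ∧ ∀ p ∈ l, 0 < p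

/-- The s-non-squashing condition: (s-1)(p₁+⋯+p_j) ≤ p_{j+1} for 1 ≤ j ≤ k-1. -/
def NSq (s : ℕ) (l : List ℕ) : Prop :=
  ∀ j, 0 < j → j < l.length → (s - 1) * (l.take j).sum ≤ l.getD j 0

/-- Number of non-squashing partitions of n into distinct parts. -/
noncomputable def b (n : ℕ) : ℕ :=
  {l : List ℕ | DistinctPartList l ∧ NSq 2 l ∧ l.sum = n}.ncard

/-- Number of non-squashing partitions (of any number) into distinct parts, all parts ≤ n. -/
noncomputable def f (n : ℕ) : ℕ :=
  {l : List ℕ | DistinctPartList l ∧ NSq 2 l ∧ ∀ p ∈ l, p ≤ n}.ncard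

/-!
Remove the largest part. A non-squashing partition into distinct parts is `g ++ [m]` with `g`
of the same kind, every part of `g` below `m` and `g.sum ≤ m`. If the largest part is `m = n`,
this says exactly that `g.sum ≤ n` and all parts of `g` are `< n`. If instead the total is `2 * n`,
then `m = 2 * n - g.sum ≥ g.sum` forces `g.sum ≤ n`, and a part `p` of `g` has `p ≤ g.sum` and
`p < m`, so `2 * p < 2 * n`. Both families are therefore in bijection with the same set of
prefixes `g`. Finally `f n - f (n - 1)` counts the partitions in which `n` occurs as a part.
-/

open Set

lemma nsq_append_singleton {s m : ℕ} {g : List ℕ} :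
    NSq s (g ++ [m]) ↔ NSq s g ∧ (s - 1) * g.sum ≤ m := by
  constructor
  · intro h
    refine ⟨fun j hj hjg => ?_, ?_⟩
    · have := h j hj (by simp; omega)
      rwa [List.take_append_of_le_length hjg.le, List.getD_append _ _ _ _ hjg] at this
    · rcases g.eq_nil_or_concat' with rfl | ⟨g', a, rfl⟩
      · simp
      · simpa using h (g' ++ [a]).length (by simp) (by simp)
  · rintro ⟨hg, hlast⟩ j hj hjl
    rw [List.length_append, List.length_singleton] at hjl
    rcases lt_or_eq_of_le (Nat.le_of_lt_succ hjl) with hjg | rfl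
    · rw [List.take_append_of_le_length hjg.le, List.getD_append _ _ _ _ hjg]
      exact hg j hj hjg
    · simpa using hlast

lemma distinctPartList_append_singleton {g : List ℕ} {m : ℕ} :
    DistinctPartList (g ++ [m]) ↔ DistinctPartList g ∧ (∀ p ∈ g, p < m) ∧ 0 < m := by
  simp only [DistinctPartList, List.pairwise_append, List.pairwise_singleton, List.forall_mem_append,
    List.mem_singleton, forall_eq]
  tauto

lemma finite_setOf_distinctPartList_le (N : ℕ) :
    {l : List ℕ | DistinctPartList l ∧ ∀ p ∈ l, p ≤ N}.Finite := by
  refine ((Finset.range (N + 1)).powerset.finite_toSet.image (Finset.sort · (· ≤ ·))).subset ?_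
  rintro l ⟨⟨hl, -⟩, hle⟩
  refine ⟨l.toFinset, ?_, (List.toFinset_sort _ hl.nodup).2 (hl.imp le_of_lt)⟩
  rw [Finset.mem_coe, Finset.mem_powerset]
  intro p hp
  simpa [Nat.lt_succ_iff] using hle p (List.mem_toFinset.1 hp)

def nsqPrefixes (n : ℕ) : Set (List ℕ) :=
  {g | DistinctPartList g ∧ NSq 2 g ∧ g.sum ≤ n ∧ ∀ p ∈ g, p < n}

lemma ncard_image_append_singleton {α : Type*} (S : Set (List α)) (last : List α → α) :
    ((fun g => g ++ [last g]) '' S).ncard = S.ncard :=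
  ncard_image_of_injective S fun g g' h => by simpa using congrArg List.dropLast h

lemma setOf_largest_part_eq_image {n : ℕ} (hn : 0 < n) :
    {l : List ℕ | DistinctPartList l ∧ NSq 2 l ∧ n ∈ l ∧ ∀ p ∈ l, p ≤ n} =
      (fun g => g ++ [n]) '' nsqPrefixes n := by
  ext l
  constructor
  · rintro ⟨hd, hq, hmem, hle⟩
    rcases l.eq_nil_or_concat' with rfl | ⟨g, m, rfl⟩
    · simp at hmem
    rw [distinctPartList_append_singleton] at hd
    rw [nsq_append_singleton] at hq
    obtain rfl : m = n := by
      have hmn : m ≤ n := hle m (by simp)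
      rcases List.mem_append.1 hmem with hg | hm
      · exact absurd (hd.2.1 n hg) (by omega)
      · exact (List.mem_singleton.1 hm).symm
    exact ⟨g, ⟨hd.1, hq.1, by simpa using hq.2, hd.2.1⟩, rfl⟩
  · rintro ⟨g, ⟨hd, hq, hsum, hlt⟩, rfl⟩
    refine ⟨distinctPartList_append_singleton.2 ⟨hd, hlt, hn⟩,
      nsq_append_singleton.2 ⟨hq, by simpa using hsum⟩, by simp, ?_⟩
    simp only [List.mem_append, List.mem_singleton]
    rintro p (hp | rfl)
    exacts [(hlt p hp).le, le_rfl]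

lemma setOf_sum_eq_two_mul_eq_image {n : ℕ} (hn : 0 < n) :
    {l : List ℕ | DistinctPartList l ∧ NSq 2 l ∧ l.sum = 2 * n} =
      (fun g => g ++ [2 * n - g.sum]) '' nsqPrefixes n := by
  ext l
  constructor
  · rintro ⟨hd, hq, hsum⟩
    rcases l.eq_nil_or_concat' with rfl | ⟨g, m, rfl⟩
    · simp at hsum; omega
    rw [distinctPartList_append_singleton] at hd
    rw [nsq_append_singleton] at hq
    rw [List.sum_append, List.sum_singleton] at hsum
    have hlt : ∀ p ∈ g, p < n := fun p hp => by
      have := hd.2.1 p hp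
      have := List.le_sum_of_mem hp
      omega
    exact ⟨g, ⟨hd.1, hq.1, by omega, hlt⟩, by simp only [show 2 * n - g.sum = m by omega]⟩
  · rintro ⟨g, ⟨hd, hq, hsum, hlt⟩, rfl⟩
    refine ⟨distinctPartList_append_singleton.2 ⟨hd, fun p hp => ?_, by omega⟩,
      nsq_append_singleton.2 ⟨hq, by omega⟩, by simp; omega⟩
    have := hlt p hp
    omega

lemma ncard_largest_part_eq_b_two_mul {n : ℕ} (hn : 0 < n) :
    {l : List ℕ | DistinctPartList l ∧ NSq 2 l ∧ n ∈ l ∧ ∀ p ∈ l, p ≤ n}.ncard = b (2 * n) := by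
  rw [b, setOf_largest_part_eq_image hn, setOf_sum_eq_two_mul_eq_image hn,
    ncard_image_append_singleton, ncard_image_append_singleton]

lemma f_succ (k : ℕ) :
    f (k + 1) = f k +
      {l : List ℕ | DistinctPartList l ∧ NSq 2 l ∧ k + 1 ∈ l ∧ ∀ p ∈ l, p ≤ k + 1}.ncard := by
  have h_split : {l : List ℕ | DistinctPartList l ∧ NSq 2 l ∧ ∀ p ∈ l, p ≤ k + 1} =
      {l | DistinctPartList l ∧ NSq 2 l ∧ ∀ p ∈ l, p ≤ k} ∪
        {l | DistinctPartList l ∧ NSq 2 l ∧ k + 1 ∈ l ∧ ∀ p ∈ l, p ≤ k + 1} := by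
    ext l
    simp only [mem_ofPred_eq, mem_union]
    by_cases hmem : k + 1 ∈ l
    · have : ¬∀ p ∈ l, p ≤ k := fun h => by have := h _ hmem; omega
      tauto
    · have hne : ∀ p ∈ l, p ≠ k + 1 := fun p hp h => hmem (h ▸ hp)
      simp only [hmem, false_and, and_false, or_false]
      refine and_congr_right' (and_congr_right' (forall₂_congr fun p hp => ?_))
      have := hne p hp
      omega
  have h_disj : Disjoint {l : List ℕ | DistinctPartList l ∧ NSq 2 l ∧ ∀ p ∈ l, p ≤ k}
      {l | DistinctPartList l ∧ NSq 2 l ∧ k + 1 ∈ l ∧ ∀ p ∈ l, p ≤ k + 1} :=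
    disjoint_left.2 fun l ⟨_, _, hle⟩ ⟨_, _, hmem, _⟩ => by have := hle _ hmem; omega
  rw [f, f, h_split, ncard_union_eq h_disj
    ((finite_setOf_distinctPartList_le k).subset fun l ⟨hd, _, hle⟩ => ⟨hd, hle⟩)
    ((finite_setOf_distinctPartList_le (k + 1)).subset fun l ⟨hd, _, _, hle⟩ => ⟨hd, hle⟩)]

theorem stmt_18 (n : ℕ) (hn : 1 ≤ n) :
    {l : List ℕ | DistinctPartList l ∧ NSq 2 l ∧ n ∈ l ∧ ∀ p ∈ l, p ≤ n}.ncard = b (2 * n) ∧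
    f n - f (n - 1) = b (2 * n) := by
  refine ⟨ncard_largest_part_eq_b_two_mul hn, ?_⟩
  obtain ⟨k, rfl⟩ : ∃ k, n = k + 1 := ⟨n - 1, by omega⟩
  rw [Nat.add_sub_cancel, f_succ, ncard_largest_part_eq_b_two_mul hn]
  omega
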